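/- arXiv:1205.5850 — 3 statements merged into one kernel-verified Lean document; each statement's English description precedes it below -/
import Mathlib

section
/- Let V ∈ C²(ℝⁿ,ℝ) with V(u) → +∞ as |u| → ∞, F = -∇V, f ∈ L²(ℝ,ℝⁿ), and let y : [0,T] → ℝⁿ be C¹ and satisfy ẏ(t) = -½F(y(t)) + f(t) on (0,T). Then for all t ∈ [0,T]: V(y(t)) + ∫_t^T |ẏ(τ)|² dτ ≤ V(y(T)) + ∫_t^T |f(τ)|² dτ. -/
open MeasureTheory Set

/-!
Along a solution the gradient is `∇V(y) = 2 (ẏ - f)`, so `d/dt V(y(t)) = ⟪∇V(y), ẏ⟫ = 2‖ẏ‖² - 2⟪f, ẏ⟫`,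
and Young's inequality `2⟪f, ẏ⟫ ≤ ‖f‖² + ‖ẏ‖²` bounds this from below by `‖ẏ‖² - ‖f‖²`.
Integrating from `t` to `T` gives the estimate.
-/

variable {E : Type*} [NormedAddCommGroup E] [InnerProductSpace ℝ E]

theorem norm_sq_sub_norm_sq_le_inner_two_smul_sub (v w : E) :
    ‖v‖ ^ 2 - ‖w‖ ^ 2 ≤ inner ℝ ((2 : ℝ) • (v - w)) v := by
  rw [real_inner_smul_left, inner_sub_left, real_inner_self_eq_norm_sq, real_inner_comm]
  linarith [norm_sub_sq_real v w, sq_nonneg ‖v - w‖]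

variable [CompleteSpace E]

theorem ContDiff.continuous_gradient {V : E → ℝ} (hV : ContDiff ℝ 1 V) :
    Continuous (gradient V) :=
  (InnerProductSpace.toDual ℝ E).symm.continuous.comp (hV.continuous_fderiv one_ne_zero)

theorem continuousOn_inner_gradient_comp {V : E → ℝ} (hV : ContDiff ℝ 1 V)
    {y y' : ℝ → E} {s : Set ℝ} (hy : ContinuousOn y s) (hy' : ContinuousOn y' s) :
    ContinuousOn (fun t => inner ℝ (gradient V (y t)) (y' t)) s :=
  (hV.continuous_gradient.comp_continuousOn hy).inner hy'

theorem integral_inner_gradient_comp_eq_sub {V : E → ℝ} (hV : ContDiff ℝ 1 V)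
    {y y' : ℝ → E} {a b : ℝ} (hab : a ≤ b) (hy : ∀ t ∈ Icc a b, HasDerivAt y (y' t) t)
    (hy' : ContinuousOn y' (Icc a b)) :
    ∫ t in a..b, inner ℝ (gradient V (y t)) (y' t) = V (y b) - V (y a) := by
  have hy_cont : ContinuousOn y (Icc a b) := fun t ht => (hy t ht).continuousAt.continuousWithinAt
  refine intervalIntegral.integral_eq_sub_of_hasDerivAt (f := fun t => V (y t)) (fun t ht => ?_)
    ((continuousOn_inner_gradient_comp hV hy_cont hy').intervalIntegrable_of_Icc hab)
  rw [uIcc_of_le hab] at ht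
  exact ((hV.differentiable one_ne_zero (y t)).hasGradientAt.hasFDerivAt).comp_hasDerivAt t (hy t ht)

theorem energy_estimate {V : E → ℝ} (hV : ContDiff ℝ 1 V) {y y' f : ℝ → E} {a b : ℝ}
    (hab : a ≤ b) (hy : ∀ t ∈ Icc a b, HasDerivAt y (y' t) t) (hy' : ContinuousOn y' (Icc a b))
    (hf : IntervalIntegrable (fun t => ‖f t‖ ^ 2) volume a b)
    (heq : ∀ t ∈ Ioo a b, gradient V (y t) = (2 : ℝ) • (y' t - f t)) :
    V (y a) + ∫ t in a..b, ‖y' t‖ ^ 2 ≤ V (y b) + ∫ t in a..b, ‖f t‖ ^ 2 := by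
  have hy'_sq : IntervalIntegrable (fun t => ‖y' t‖ ^ 2) volume a b :=
    (hy'.norm.pow 2).intervalIntegrable_of_Icc hab
  have hgrad_int : IntervalIntegrable (fun t => inner ℝ (gradient V (y t)) (y' t)) volume a b := by
    have hy_cont : ContinuousOn y (Icc a b) := fun t ht => (hy t ht).continuousAt.continuousWithinAt
    exact (continuousOn_inner_gradient_comp hV hy_cont hy').intervalIntegrable_of_Icc hab
  have hmono : ∫ t in a..b, (‖y' t‖ ^ 2 - ‖f t‖ ^ 2)
      ≤ ∫ t in a..b, inner ℝ (gradient V (y t)) (y' t) :=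
    intervalIntegral.integral_mono_on_of_le_Ioo hab (hy'_sq.sub hf) hgrad_int fun t ht => by
      rw [heq t ht]
      exact norm_sq_sub_norm_sq_le_inner_two_smul_sub _ _
  rw [intervalIntegral.integral_sub hy'_sq hf, integral_inner_gradient_comp_eq_sub hV hab hy hy']
    at hmono
  linarith

theorem apriori_energy_estimate_general
    (n : ℕ) (V : EuclideanSpace ℝ (Fin n) → ℝ) (hV : ContDiff ℝ 2 V)
    (f : ℝ → EuclideanSpace ℝ (Fin n)) (hf : MemLp f 2 volume)
    (T : ℝ) (y y' : ℝ → EuclideanSpace ℝ (Fin n))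
    (hderiv : ∀ t ∈ Set.Icc (0 : ℝ) T, HasDerivAt y (y' t) t)
    (hy'cont : ContinuousOn y' (Set.Icc 0 T))
    -- the equation `ẏ = -½ F(y) + f` with `F = -∇V` on `(0,T)`:
    (heq : ∀ t ∈ Set.Ioo (0 : ℝ) T,
      y' t = -(1 / 2 : ℝ) • (-(gradient V (y t))) + f t) :
    ∀ t ∈ Set.Icc (0 : ℝ) T,
      V (y t) + ∫ τ in t..T, ‖y' τ‖ ^ 2 ≤ V (y T) + ∫ τ in t..T, ‖f τ‖ ^ 2 := by
  intro t ht
  have hsub : Icc t T ⊆ Icc 0 T := Icc_subset_Icc_left ht.1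
  have hf_sq : Integrable (fun τ => ‖f τ‖ ^ 2) volume := hf.integrable_norm_pow two_ne_zero
  refine energy_estimate (hV.of_le (by norm_num)) ht.2 (fun τ hτ => hderiv τ (hsub hτ))
    (hy'cont.mono hsub) hf_sq.intervalIntegrable fun τ hτ => ?_
  rw [heq τ ⟨ht.1.trans_lt hτ.1, hτ.2⟩]
  module

theorem apriori_energy_estimate
    (n : ℕ) (V : EuclideanSpace ℝ (Fin n) → ℝ) (hV : ContDiff ℝ 2 V)
    -- coercivity: `V(u) → +∞` as `|u| → ∞`:
    (hcoerc : ∀ M : ℝ, ∃ R : ℝ, ∀ u : EuclideanSpace ℝ (Fin n), R < ‖u‖ → M < V u)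
    (f : ℝ → EuclideanSpace ℝ (Fin n)) (hf : MemLp f 2 volume)
    (T : ℝ) (hT : 0 < T) (y y' : ℝ → EuclideanSpace ℝ (Fin n))
    (hderiv : ∀ t ∈ Set.Icc (0 : ℝ) T, HasDerivAt y (y' t) t)
    (hy'cont : ContinuousOn y' (Set.Icc 0 T))
    -- the equation `ẏ = -½ F(y) + f` with `F = -∇V` on `(0,T)`:
    (heq : ∀ t ∈ Set.Ioo (0 : ℝ) T,
      y' t = -(1 / 2 : ℝ) • (-(gradient V (y t))) + f t) :
    ∀ t ∈ Set.Icc (0 : ℝ) T,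
      V (y t) + ∫ τ in t..T, ‖y' τ‖ ^ 2 ≤ V (y T) + ∫ τ in t..T, ‖f τ‖ ^ 2 :=
  apriori_energy_estimate_general n V hV f hf T y y' hderiv hy'cont heq
end

section
/- Let V ∈ C²(ℝⁿ,ℝ) with V(u) → +∞ as |u| → ∞, F = -∇V, f ∈ L²(ℝ,ℝⁿ), and let y be a solution of ẏ = -½F(y) + f on [0,T] with prescribed value y(T). Then sup_{t ∈ [0,T]} |y(t)| < ∞ and ẏ ∈ L²(0,T;ℝⁿ), with bounds depending only on V(y(T)), ‖f‖_{L²}, and V. -/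
/-!
Along a solution, `d/dt V(y) = ⟪∇V(y), ẏ⟫`, and the equation `ẏ = ½∇V(y) + f` gives
`|ẏ|² = ½⟪∇V(y), ẏ⟫ + ⟪ẏ, f⟫ ≤ ⟪∇V(y), ẏ⟫ + |f|²` after absorbing `⟪ẏ, f⟫ ≤ ½|ẏ|² + ½|f|²`.
Integrating over `[t, T]` yields `V(y(t)) + ∫_t^T |ẏ|² ≤ V(y(T)) + ‖f‖²_{L²}`. Since `V` is coercive,
it is bounded below and its sublevel sets are bounded, which bounds both `|y(t)|` and `∫_0^T |ẏ|²`.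
-/

open MeasureTheory Filter Set
open scoped RealInnerProductSpace

lemma tendsto_cocompact_atTop_of_coercive {E : Type*} [NormedAddCommGroup E] [ProperSpace E]
    {V : E → ℝ} (hV : ∀ M : ℝ, ∃ R : ℝ, ∀ u : E, R < ‖u‖ → M < V u) :
    Tendsto V (cocompact E) atTop := by
  rw [← Metric.cobounded_eq_cocompact]
  refine tendsto_atTop.2 fun M => ?_
  obtain ⟨R, hR⟩ := hV M
  exact (tendsto_norm_cobounded_atTop.eventually_gt_atTop R).mono fun u hu => (hR u hu).le

lemma ContDiff.continuous_gradient_s13 {F : Type*} [NormedAddCommGroup F] [InnerProductSpace ℝ F]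
    [CompleteSpace F] {V : F → ℝ} (hV : ContDiff ℝ 1 V) : Continuous (gradient V) :=
  (InnerProductSpace.toDual ℝ F).symm.continuous.comp (hV.continuous_fderiv one_ne_zero)

lemma MeasureTheory.MemLp.integral_norm_sq_eq {α E : Type*} [MeasurableSpace α] {μ : Measure α}
    [NormedAddCommGroup E] {f : α → E} (hf : MemLp f 2 μ) :
    ∫ x, ‖f x‖ ^ 2 ∂μ = (eLpNorm f 2 μ).toReal ^ 2 := by
  rw [toReal_eLpNorm hf.1, lpNorm_eq_integral_norm_rpow_toReal two_ne_zero ENNReal.ofNat_ne_top hf.1,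
    ← Real.rpow_natCast, ← Real.rpow_mul (integral_nonneg fun _ => by positivity)]
  norm_num

lemma MeasureTheory.MemLp.intervalIntegral_norm_sq_le {E : Type*} [NormedAddCommGroup E] {f : ℝ → E}
    (hf : MemLp f 2 volume) {a b : ℝ} (hab : a ≤ b) :
    ∫ t in a..b, ‖f t‖ ^ 2 ≤ (eLpNorm f 2 volume).toReal ^ 2 := by
  rw [← hf.integral_norm_sq_eq, intervalIntegral.integral_of_le hab]
  exact setIntegral_le_integral ((memLp_two_iff_integrable_sq_norm hf.1).1 hf)
    (.of_forall fun _ => by positivity)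

lemma norm_sq_le_inner_add_norm_sq {F : Type*} [NormedAddCommGroup F] [InnerProductSpace ℝ F]
    {v g w : F} (h : v = (1 / 2 : ℝ) • g + w) : ‖v‖ ^ 2 ≤ ⟪g, v⟫ + ‖w‖ ^ 2 := by
  have hv : ‖v‖ ^ 2 = (1 / 2 : ℝ) * ⟪g, v⟫ + ⟪w, v⟫ := by
    conv_lhs => rw [← real_inner_self_eq_norm_sq, h, inner_add_left, real_inner_smul_left, ← h]
  nlinarith [real_inner_le_norm w v, sq_nonneg (‖v‖ - ‖w‖)]

section GradientFlow

variable {F : Type*} [NormedAddCommGroup F] [InnerProductSpace ℝ F] [CompleteSpace F]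
  {V : F → ℝ} {y y' f : ℝ → F} {a b : ℝ}

lemma DifferentiableAt.hasDerivAt_comp_inner_gradient {t : ℝ} (hV : DifferentiableAt ℝ V (y t))
    (hy : HasDerivAt y (y' t) t) :
    HasDerivAt (fun s => V (y s)) ⟪gradient V (y t), y' t⟫ t := by
  rw [inner_gradient_left]
  exact hV.hasFDerivAt.comp_hasDerivAt t hy

theorem energy_le_of_gradient_flow (hV : ContDiff ℝ 1 V) (hab : a ≤ b)
    (hy : ∀ t ∈ Icc a b, HasDerivAt y (y' t) t) (hy' : ContinuousOn y' (Icc a b))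
    (hf : IntervalIntegrable (fun t => ‖f t‖ ^ 2) volume a b)
    (hode : ∀ t ∈ Ioo a b, y' t = (1 / 2 : ℝ) • gradient V (y t) + f t) :
    V (y a) + ∫ t in a..b, ‖y' t‖ ^ 2 ≤ V (y b) + ∫ t in a..b, ‖f t‖ ^ 2 := by
  have hycont : ContinuousOn y (Icc a b) := fun t ht => (hy t ht).continuousAt.continuousWithinAt
  have hpower : ContinuousOn (fun t => ⟪gradient V (y t), y' t⟫) (Icc a b) :=
    (hV.continuous_gradient_s13.comp_continuousOn hycont).inner hy'
  have hFTC : ∫ t in a..b, ⟪gradient V (y t), y' t⟫ = V (y b) - V (y a) :=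
    intervalIntegral.integral_eq_sub_of_hasDerivAt
      (fun t ht => (hV.differentiable one_ne_zero _).hasDerivAt_comp_inner_gradient
        (hy t (uIcc_of_le hab ▸ ht)))
      (hpower.intervalIntegrable_of_Icc hab)
  have hmono : ∫ t in a..b, ‖y' t‖ ^ 2 ≤ ∫ t in a..b, (⟪gradient V (y t), y' t⟫ + ‖f t‖ ^ 2) :=
    intervalIntegral.integral_mono_on_of_le_Ioo hab
      ((hy'.norm.pow 2).intervalIntegrable_of_Icc hab)
      ((hpower.intervalIntegrable_of_Icc hab).add hf)
      fun t ht => norm_sq_le_inner_add_norm_sq (hode t ht)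
  rw [intervalIntegral.integral_add (hpower.intervalIntegrable_of_Icc hab) hf, hFTC] at hmono
  linarith

end GradientFlow

theorem apriori_bound_solution
    (n : ℕ) (V : EuclideanSpace ℝ (Fin n) → ℝ) (hV : ContDiff ℝ 2 V)
    -- coercivity: `V(u) → +∞` as `|u| → ∞`:
    (hcoerc : ∀ M : ℝ, ∃ R : ℝ, ∀ u : EuclideanSpace ℝ (Fin n), R < ‖u‖ → M < V u) :
    -- bounds depending only on `V(y(T))`, `‖f‖_{L²}` (and `V` itself):
    ∃ B : ℝ → ℝ → ℝ,
      ∀ (T : ℝ), 0 < T → ∀ f : ℝ → EuclideanSpace ℝ (Fin n), MemLp f 2 volume →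
        ∀ y y' : ℝ → EuclideanSpace ℝ (Fin n),
          (∀ t ∈ Set.Icc (0 : ℝ) T, HasDerivAt y (y' t) t) →
          ContinuousOn y' (Set.Icc 0 T) →
          (∀ t ∈ Set.Ioo (0 : ℝ) T,
            y' t = -(1 / 2 : ℝ) • (-(gradient V (y t))) + f t) →
          (∀ t ∈ Set.Icc (0 : ℝ) T,
              ‖y t‖ ≤ B (V (y T)) ((eLpNorm f 2 volume).toReal)) ∧
            ∫ t in (0 : ℝ)..T, ‖y' t‖ ^ 2 ≤
              B (V (y T)) ((eLpNorm f 2 volume).toReal) := by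
  obtain ⟨x₀, hx₀⟩ := hV.continuous.exists_forall_le (tendsto_cocompact_atTop_of_coercive hcoerc)
  choose R hR using hcoerc
  refine ⟨fun a b => max (R (a + b ^ 2)) (a + b ^ 2 - V x₀), ?_⟩
  intro T hT f hf y y' hy hy' hode
  have energy : ∀ t ∈ Icc 0 T,
      V (y t) + ∫ s in t..T, ‖y' s‖ ^ 2 ≤ V (y T) + (eLpNorm f 2 volume).toReal ^ 2 := by
    intro t ht
    have hsub : Icc t T ⊆ Icc 0 T := Icc_subset_Icc_left ht.1
    calc V (y t) + ∫ s in t..T, ‖y' s‖ ^ 2 ≤ V (y T) + ∫ s in t..T, ‖f s‖ ^ 2 :=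
          energy_le_of_gradient_flow (hV.of_le one_le_two) ht.2 (fun s hs => hy s (hsub hs))
            (hy'.mono hsub) ((memLp_two_iff_integrable_sq_norm hf.1).1 hf).intervalIntegrable
            fun s hs => by simpa using hode s (Ioo_subset_Ioo_left ht.1 hs)
      _ ≤ V (y T) + (eLpNorm f 2 volume).toReal ^ 2 := by
          gcongr; exact hf.intervalIntegral_norm_sq_le ht.2
  refine ⟨fun t ht => le_max_of_le_left (not_lt.1 fun hlarge => ?_), ?_⟩
  · have : 0 ≤ ∫ s in t..T, ‖y' s‖ ^ 2 :=
      intervalIntegral.integral_nonneg ht.2 fun s _ => sq_nonneg _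
    linarith [energy t ht, hR _ _ hlarge]
  · exact le_max_of_le_right (by linarith [energy 0 ⟨le_rfl, hT.le⟩, hx₀ (y 0)])
end

section
/- Let F : ℝ → ℝ satisfy F(y) = 0 for |y| < 1, and let f(t) = 1/(1+|t|). Then there is no continuously differentiable function y : [0,∞) → ℝ satisfying ẏ(t) = -½F(y(t)) + f(t) for t > 0 together with y(t) → 0 as t → +∞. -/
open Filter

/-! Near the flat stationary point the equation reduces to `ẏ = 1/(1+t)`, so a trajectory
that eventually stays in `|y| < 1` differs from `log (1 + t)` by a constant and hence
tends to `+∞`, not to `0`. -/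

theorem exists_eventuallyEq_add_const_of_hasDerivAt {f g f' : ℝ → ℝ}
    (hf : ∀ᶠ x in atTop, HasDerivAt f (f' x) x) (hg : ∀ᶠ x in atTop, HasDerivAt g (f' x) x) :
    ∃ c, f =ᶠ[atTop] fun x => g x + c := by
  obtain ⟨a, ha⟩ := (hf.and hg).exists_forall_of_atTop
  refine ⟨f a - g a, eventually_atTop.2 ⟨a, fun x hx => ?_⟩⟩
  have hderiv : ∀ z ∈ Set.Ico a x, HasDerivWithinAt (f - g) 0 (Set.Ici z) z :=
    fun z hz => by simpa only [sub_self] using ((ha z hz.1).1.sub (ha z hz.1).2).hasDerivWithinAt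
  have hcont : ContinuousOn (f - g) (Set.Icc a x) := fun z hz =>
    ((ha z hz.1).1.sub (ha z hz.1).2).continuousAt.continuousWithinAt
  have := constant_of_has_deriv_right_zero hcont hderiv x (Set.right_mem_Icc.2 hx)
  simp only [Pi.sub_apply] at this
  linarith

theorem hasDerivAt_log_one_add {x : ℝ} (hx : -1 < x) :
    HasDerivAt (fun t => Real.log (1 + t)) (1 + x)⁻¹ x := by
  simpa using ((hasDerivAt_id' x).const_add 1).log (by linarith)

theorem tendsto_log_one_add_atTop : Tendsto (fun t : ℝ => Real.log (1 + t)) atTop atTop :=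
  Real.tendsto_log_atTop.comp (tendsto_atTop_add_const_left _ 1 tendsto_id)

theorem tendsto_atTop_of_hasDerivAt_inv_one_add {y : ℝ → ℝ}
    (hy : ∀ᶠ t in atTop, HasDerivAt y (1 + t)⁻¹ t) : Tendsto y atTop atTop := by
  obtain ⟨c, hc⟩ := exists_eventuallyEq_add_const_of_hasDerivAt hy
    ((eventually_gt_atTop (-1)).mono fun _ => hasDerivAt_log_one_add)
  exact (tendsto_atTop_add_const_right _ c tendsto_log_one_add_atTop).congr' hc.symm

theorem no_incoming_trajectory_flat_nonhyperbolic
    (F : ℝ → ℝ) (hF : ∀ v : ℝ, |v| < 1 → F v = 0)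
    (y : ℝ → ℝ)
    (hy : ∀ t : ℝ, 0 < t →
      HasDerivAt y (-(1 / 2) * F (y t) + 1 / (1 + |t|)) t) :
    ¬ Tendsto y atTop (nhds 0) := by
  intro hlim
  have hsmall : ∀ᶠ t in atTop, |y t| < 1 := by
    simpa [Real.dist_eq] using hlim (Metric.ball_mem_nhds 0 one_pos)
  have hflat : ∀ᶠ t in atTop, HasDerivAt y (1 + t)⁻¹ t := by
    filter_upwards [hsmall, eventually_gt_atTop 0] with t hyt ht
    simpa [hF _ hyt, abs_of_pos ht] using hy t ht
  exact not_tendsto_nhds_of_tendsto_atTop (tendsto_atTop_of_hasDerivAt_inv_one_add hflat) 0 hlim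
end
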